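/- arXiv:math/0309383 — 2 statements merged into one kernel-verified Lean document; each statement's English description precedes it below -/
import Mathlib

section
/- Suppose (s_k), (a_k), and for each l ≥ 1 the sequences (a^l_k) are sequences of non-negative reals satisfying a_{k+1} ≤ a_k + s_k and a^l_{k+1} ≤ a^l_k + s_k for all k and l, with ∑_k s_k < ∞. If lim_k a_k = a, lim_k a^l_k = a^l for each l, and lim_l a^l_k = a_k for each fixed k, then limsup_l a^l ≤ a. -/
/-!
Summing the one-step estimate `x (k+1) ≤ x k + s k` gives `x m ≤ x k + ∑_{j ≥ k} s j` for `m ≥ k`.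
Letting `m → ∞` in this estimate for `A l` gives `a^l ≤ A l k + ∑_{j ≥ k} s j`; letting `l → ∞`
gives `limsup_l a^l ≤ a k + ∑_{j ≥ k} s j`; and since the tails of a convergent series tend to
zero, letting `k → ∞` gives `limsup_l a^l ≤ a`.
-/

open Filter Topology Finset

lemma le_add_sum_Ico_of_le_add {x s : ℕ → ℝ} (h : ∀ k, x (k + 1) ≤ x k + s k) {k m : ℕ}
    (hkm : k ≤ m) : x m ≤ x k + ∑ j ∈ Ico k m, s j := by
  have htelescope := sum_Ico_sub x hkm
  have hsteps := sum_le_sum (s := Ico k m) fun j _ => sub_le_iff_le_add'.2 (h j)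
  linarith

lemma sum_Ico_le_tsum_nat_add {s : ℕ → ℝ} (hs0 : ∀ k, 0 ≤ s k) (hs : Summable s) (k m : ℕ) :
    ∑ j ∈ Ico k m, s j ≤ ∑' j, s (j + k) := by
  rw [sum_Ico_eq_sum_range]
  simpa only [add_comm k] using
    ((summable_nat_add_iff k).2 hs).sum_le_tsum (range (m - k)) fun j _ => hs0 (j + k)

lemma le_add_tsum_nat_add_of_tendsto {x s : ℕ → ℝ} {L : ℝ} (h : ∀ k, x (k + 1) ≤ x k + s k)
    (hs0 : ∀ k, 0 ≤ s k) (hs : Summable s) (hx : Tendsto x atTop (𝓝 L)) (k : ℕ) :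
    L ≤ x k + ∑' j, s (j + k) :=
  le_of_tendsto hx <| (eventually_ge_atTop k).mono fun m hm =>
    (le_add_sum_Ico_of_le_add h hm).trans (add_le_add_right (sum_Ico_le_tsum_nat_add hs0 hs k m) _)

theorem stmt1_general (s a : ℕ → ℝ) (A : ℕ → ℕ → ℝ) (aLim : ℝ) (aL : ℕ → ℝ)
    (hs0 : ∀ k, 0 ≤ s k) (hA0 : ∀ l k, 0 ≤ A l k)
    (hrecA : ∀ l k, A l (k + 1) ≤ A l k + s k)
    (hsum : Summable s)
    (hconv : Filter.Tendsto a Filter.atTop (nhds aLim))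
    (hconvA : ∀ l, Filter.Tendsto (A l) Filter.atTop (nhds (aL l)))
    (hdiag : ∀ k, Filter.Tendsto (fun l => A l k) Filter.atTop (nhds (a k))) :
    Filter.limsup aL Filter.atTop ≤ aLim := by
  set T : ℕ → ℝ := fun k => ∑' j, s (j + k)
  have hbound : ∀ l k, aL l ≤ A l k + T k := fun l =>
    le_add_tsum_nat_add_of_tendsto (hrecA l) hs0 hsum (hconvA l)
  have haL0 : ∀ l, 0 ≤ aL l := fun l => ge_of_tendsto' (hconvA l) (hA0 l)
  have hlimsup : ∀ k, limsup aL atTop ≤ a k + T k := fun k => by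
    have hlim := (hdiag k).add_const (T k)
    calc limsup aL atTop ≤ limsup (fun l => A l k + T k) atTop :=
          limsup_le_limsup (Eventually.of_forall (hbound · k))
            (isCoboundedUnder_le_of_le atTop haL0) hlim.isBoundedUnder_le
      _ = a k + T k := hlim.limsup_eq
  simpa using ge_of_tendsto' (hconv.add (tendsto_sum_nat_add s)) hlimsup

/-- Abstract semi-continuity lemma: if all sequences satisfy the uniform estimate
`x (k+1) ≤ x k + s k` with `∑ s k < ∞`, `a k → aLim`, `A l k → aL l` (in `k`) and
`A l k → a k` (in `l`), then `limsup_l aL l ≤ aLim`. -/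
theorem stmt1 (s a : ℕ → ℝ) (A : ℕ → ℕ → ℝ) (aLim : ℝ) (aL : ℕ → ℝ)
    (ha0 : ∀ k, 0 ≤ a k) (hs0 : ∀ k, 0 ≤ s k) (hA0 : ∀ l k, 0 ≤ A l k)
    (hrec : ∀ k, a (k + 1) ≤ a k + s k)
    (hrecA : ∀ l k, A l (k + 1) ≤ A l k + s k)
    (hsum : Summable s)
    (hconv : Filter.Tendsto a Filter.atTop (nhds aLim))
    (hconvA : ∀ l, Filter.Tendsto (A l) Filter.atTop (nhds (aL l)))
    (hdiag : ∀ k, Filter.Tendsto (fun l => A l k) Filter.atTop (nhds (a k))) :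
    Filter.limsup aL Filter.atTop ≤ aLim :=
  stmt1_general s a A aLim aL hs0 hA0 hrecA hsum hconv hconvA hdiag
end

section
/- Let A = (A_1, …, A_n) be a row contraction (n ≥ 2) with Φ(X) = ∑ A_i X A_i*, and suppose tr(I − Φ(I)) < ∞. Then the limit lim_{k→∞} tr(I − Φ^k(I))/n^k exists. -/
open ContinuousLinearMap in
/-- The completely positive map `Φ(X) = ∑ Aᵢ X Aᵢ*` associated to a tuple of operators. -/
noncomputable def Phi {H : Type*} [NormedAddCommGroup H] [InnerProductSpace ℂ H]
    [CompleteSpace H] {n : ℕ} (A : Fin n → H →L[ℂ] H) (X : H →L[ℂ] H) : H →L[ℂ] H :=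
  ∑ i, A i ∘L X ∘L adjoint (A i)

/-!
Put `D = 1 - Φ 1 ≥ 0`. Then `1 - Φ^k 1 = ∑_{j<k} Φ^j D` is a sum of positive operators, so its
trace is `∑_{j<k} r_j` with `r_j = tr Φ^j D`. A row contraction consists of contractions, and
`tr (T X T*) ≤ ‖T‖² tr X` for `X ≥ 0` (write `X = S S*` and use
`tr (U U*) = ∑ ‖U eᵢ‖² = tr (U* U)`), so `r_{j+1} ≤ n r_j`. Hence `r_j / n^j` decreases to a
limit `L`, and `n^{-k} ∑_{j<k} r_j = ∑_{j<k} (r_j / n^j) n^{-(k-j)}` tends to `L / (n - 1)`.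
-/

open ContinuousLinearMap Filter Topology
open scoped InnerProductSpace ENNReal

theorem tendsto_sum_range_mul_pow_sub {b : ℕ → ℝ} {L c : ℝ} (hb : Tendsto b atTop (𝓝 L))
    (hc : |c| < 1) :
    Tendsto (fun k => ∑ j ∈ Finset.range k, b j * c ^ (k - j)) atTop
      (𝓝 (L * c / (1 - c))) := by
  obtain ⟨C, hC⟩ := isBounded_iff_forall_norm_le.mp (Metric.isBounded_range_of_tendsto b hb)
  have hC0 : 0 ≤ C := (norm_nonneg _).trans (hC _ (Set.mem_range_self 0))
  -- Reversing the order of summation turns the `k`-th sum into `∑' m, G k m`, and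
  -- `|G k m| ≤ C |c|^(m+1)` allows dominated convergence.
  set G : ℕ → ℕ → ℝ := fun k m => if m < k then b (k - 1 - m) * c ^ (m + 1) else 0
  have hG : ∀ k, ∑ j ∈ Finset.range k, b j * c ^ (k - j) = ∑' m, G k m := by
    intro k
    rw [tsum_eq_sum (s := Finset.range k) fun m hm => if_neg (by simpa using hm),
      ← Finset.sum_range_reflect]
    refine Finset.sum_congr rfl fun m hm => ?_
    have hmk := Finset.mem_range.mp hm
    rw [if_pos hmk]
    congr 2
    omega
  have hlim : ∀ m, Tendsto (fun k => G k m) atTop (𝓝 (L * c ^ (m + 1))) := by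
    intro m
    refine ((hb.comp (tendsto_sub_atTop_nat (m + 1))).mul_const _).congr' ?_
    filter_upwards [eventually_gt_atTop m] with k hk
    simp [G, hk, Nat.sub_sub, add_comm]
  have hbound : ∀ k m, ‖G k m‖ ≤ C * |c| * |c| ^ m := by
    intro k m
    simp only [G]
    split_ifs
    · rw [norm_mul, norm_pow, Real.norm_eq_abs c, pow_succ', ← mul_assoc]
      gcongr
      exact hC _ (Set.mem_range_self _)
    · rw [norm_zero]
      positivity
  have hsum : Summable fun m => C * |c| * |c| ^ m :=
    (summable_geometric_of_lt_one (abs_nonneg c) hc).mul_left _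
  have hval : ∑' m, L * c ^ (m + 1) = L * c / (1 - c) := by
    simp_rw [pow_succ', ← mul_assoc]
    rw [tsum_mul_left, tsum_geometric_of_abs_lt_one hc, div_eq_mul_inv]
  rw [← hval, funext hG]
  exact tendsto_tsum_of_dominated_convergence hsum hlim (Eventually.of_forall hbound)

theorem exists_tendsto_sum_range_div_pow {a : ℝ} (ha : 1 < a) {r : ℕ → ℝ}
    (hr0 : ∀ j, 0 ≤ r j) (hr : ∀ j, r (j + 1) ≤ a * r j) :
    ∃ l, Tendsto (fun k => (∑ j ∈ Finset.range k, r j) / a ^ k) atTop (𝓝 l) := by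
  have ha0 : 0 < a := zero_lt_one.trans ha
  have hanti : Antitone fun j => r j / a ^ j := by
    refine antitone_nat_of_succ_le fun j => ?_
    rw [pow_succ', ← div_div, div_le_div_iff_of_pos_right (by positivity),
      div_le_iff₀ ha0, mul_comm]
    exact hr j
  have hlim := tendsto_atTop_ciInf hanti
    ⟨0, by rintro _ ⟨j, rfl⟩; exact div_nonneg (hr0 j) (by positivity)⟩
  refine ⟨_, (tendsto_sum_range_mul_pow_sub hlim (c := a⁻¹) ?_).congr fun k => ?_⟩
  · rw [abs_of_pos (inv_pos.mpr ha0)]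
    exact inv_lt_one_of_one_lt₀ ha
  · rw [Finset.sum_div]
    refine Finset.sum_congr rfl fun j hj => ?_
    rw [inv_pow_sub₀ ha0.ne' (Finset.mem_range.mp hj).le]
    field_simp

namespace HilbertBasis

section Parseval

variable {𝕜 E F ι κ : Type*} [RCLike 𝕜] [NormedAddCommGroup E] [InnerProductSpace 𝕜 E]
  [NormedAddCommGroup F] [InnerProductSpace 𝕜 F]

theorem tsum_enorm_inner_sq (b : HilbertBasis ι 𝕜 E) (x : E) :
    ∑' i, ‖⟪b i, x⟫_𝕜‖ₑ ^ 2 = ‖x‖ₑ ^ 2 := by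
  have h := lp.hasSum_norm (p := 2) (by norm_num) (b.repr x)
  simp only [b.repr_apply_apply, LinearIsometryEquiv.norm_map, ENNReal.toReal_ofNat,
    Real.rpow_two] at h
  simp_rw [← ofReal_norm, ← ENNReal.ofReal_pow (norm_nonneg _)]
  rw [← ENNReal.ofReal_tsum_of_nonneg (fun _ => by positivity) h.summable, h.tsum_eq]

theorem tsum_enorm_adjoint_apply_sq [CompleteSpace E] [CompleteSpace F]
    (bE : HilbertBasis ι 𝕜 E) (bF : HilbertBasis κ 𝕜 F) (T : E →L[𝕜] F) :
    ∑' j, ‖adjoint T (bF j)‖ₑ ^ 2 = ∑' i, ‖T (bE i)‖ₑ ^ 2 := by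
  calc ∑' j, ‖adjoint T (bF j)‖ₑ ^ 2
      = ∑' j, ∑' i, ‖⟪bE i, adjoint T (bF j)⟫_𝕜‖ₑ ^ 2 := by simp_rw [bE.tsum_enorm_inner_sq]
    _ = ∑' i, ∑' j, ‖⟪bF j, T (bE i)⟫_𝕜‖ₑ ^ 2 := by
        rw [ENNReal.tsum_comm]
        simp_rw [adjoint_inner_right, ← ofReal_norm, norm_inner_symm]
    _ = ∑' i, ‖T (bE i)‖ₑ ^ 2 := by simp_rw [bF.tsum_enorm_inner_sq]

end Parseval

variable {ι H : Type*} [NormedAddCommGroup H] [InnerProductSpace ℂ H]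
  (b : HilbertBasis ι ℂ H)

/-- The trace along `b`, valued in `[0, ∞]`. It is only meaningful for positive operators:
`ENNReal.ofReal` sends negative diagonal entries to `0`. -/
noncomputable def ennTrace (X : H →L[ℂ] H) : ℝ≥0∞ :=
  ∑' i, ENNReal.ofReal (⟪X (b i), b i⟫_ℂ).re

theorem ennTrace_sum {J : Type*} (s : Finset J) {X : J → H →L[ℂ] H}
    (hX : ∀ j ∈ s, (X j).IsPositive) :
    b.ennTrace (∑ j ∈ s, X j) = ∑ j ∈ s, b.ennTrace (X j) := by
  simp only [ennTrace]
  rw [← Summable.tsum_finsetSum fun _ _ => ENNReal.summable]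
  refine tsum_congr fun i => ?_
  rw [sum_apply, sum_inner, Complex.re_sum, ENNReal.ofReal_sum_of_nonneg]
  exact fun j hj => (hX j hj).re_inner_nonneg_left (b i)

/-- When the trace is infinite both sides are `0`, so no summability is needed. -/
theorem tsum_re_inner_eq_toReal_ennTrace {X : H →L[ℂ] H} (hX : X.IsPositive) :
    ∑' i, (⟪X (b i), b i⟫_ℂ).re = (b.ennTrace X).toReal := by
  rw [ennTrace, ENNReal.tsum_toReal_eq fun _ => ENNReal.ofReal_ne_top]
  exact tsum_congr fun i => (ENNReal.toReal_ofReal (hX.re_inner_nonneg_left (b i))).symm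

theorem ennTrace_ne_top_of_summable {X : H →L[ℂ] H} (hX : X.IsPositive)
    (h : Summable fun i => (⟪X (b i), b i⟫_ℂ).re) : b.ennTrace X ≠ ⊤ := by
  rw [ennTrace, ← ENNReal.ofReal_tsum_of_nonneg _ h]
  · exact ENNReal.ofReal_ne_top
  · exact fun i => hX.re_inner_nonneg_left (b i)

variable [CompleteSpace H]

theorem ennTrace_comp_adjoint_self (S : H →L[ℂ] H) :
    b.ennTrace (S ∘L adjoint S) = ∑' i, ‖S (b i)‖ₑ ^ 2 := by
  rw [← tsum_enorm_adjoint_apply_sq b b S]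
  refine tsum_congr fun i => ?_
  rw [comp_apply, ← adjoint_inner_right, ← RCLike.re_to_complex, inner_self_eq_norm_sq,
    ENNReal.ofReal_pow (norm_nonneg _), ofReal_norm]

theorem ennTrace_conj_le {X : H →L[ℂ] H} (hX : X.IsPositive) (T : H →L[ℂ] H) :
    b.ennTrace (T ∘L X ∘L adjoint T) ≤ ‖T‖ₑ ^ 2 * b.ennTrace X := by
  obtain ⟨S, rfl⟩ :=
    CStarAlgebra.nonneg_iff_eq_mul_star_self.mp ((nonneg_iff_isPositive X).mpr hX)
  have hconj : T ∘L (S * star S) ∘L adjoint T = (T ∘L S) ∘L adjoint (T ∘L S) := by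
    rw [star_eq_adjoint, adjoint_comp, mul_def]
    rfl
  rw [hconj, star_eq_adjoint, mul_def, ennTrace_comp_adjoint_self, ennTrace_comp_adjoint_self,
    ← ENNReal.tsum_mul_left]
  refine ENNReal.tsum_le_tsum fun i => ?_
  rw [← mul_pow]
  gcongr
  exact T.le_opENorm _

end HilbertBasis

section Phi

variable {H : Type*} [NormedAddCommGroup H] [InnerProductSpace ℂ H] [CompleteSpace H] {n : ℕ}
  (A : Fin n → H →L[ℂ] H)

theorem Phi_sub (X Y : H →L[ℂ] H) : Phi A (X - Y) = Phi A X - Phi A Y := by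
  simp only [Phi, comp_sub, sub_comp, Finset.sum_sub_distrib]

theorem iterate_Phi_sub (k : ℕ) (X Y : H →L[ℂ] H) :
    (Phi A)^[k] (X - Y) = (Phi A)^[k] X - (Phi A)^[k] Y := by
  induction k generalizing X Y with
  | zero => rfl
  | succ k ih => simp only [Function.iterate_succ_apply, Phi_sub, ih]

theorem one_sub_iterate_Phi_one (k : ℕ) :
    1 - (Phi A)^[k] 1 = ∑ j ∈ Finset.range k, (Phi A)^[j] (1 - Phi A 1) := by
  induction k with
  | zero => simp
  | succ k ih =>
    rw [Finset.sum_range_succ, ← ih, iterate_Phi_sub, ← Function.iterate_succ_apply]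
    abel

theorem isPositive_Phi {X : H →L[ℂ] H} (hX : X.IsPositive) : (Phi A X).IsPositive :=
  isPositive_sum _ fun i _ => hX.conj_adjoint (A i)

theorem isPositive_iterate_Phi {X : H →L[ℂ] H} (hX : X.IsPositive) (k : ℕ) :
    ((Phi A)^[k] X).IsPositive := by
  induction k with
  | zero => exact hX
  | succ k ih => rw [Function.iterate_succ_apply']; exact isPositive_Phi A ih

theorem norm_le_one_of_isPositive_one_sub_Phi_one (hA : (1 - Phi A 1).IsPositive) (l : Fin n) :
    ‖A l‖ ≤ 1 := by
  rw [← LinearIsometryEquiv.norm_map adjoint]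
  refine opNorm_le_bound _ zero_le_one fun x => ?_
  have hsum :
      (⟪(1 - Phi A 1) x, x⟫_ℂ).re = ‖x‖ ^ 2 - ∑ i, ‖adjoint (A i) x‖ ^ 2 := by
    have happly : (1 - Phi A 1) x = x - ∑ i, A i (adjoint (A i) x) := by
      simp [Phi, sum_apply]
    rw [happly, inner_sub_left, sum_inner, Complex.sub_re, Complex.re_sum]
    congr 1
    · exact inner_self_eq_norm_sq (𝕜 := ℂ) x
    · refine Finset.sum_congr rfl fun i _ => ?_
      rw [← adjoint_inner_right]
      exact inner_self_eq_norm_sq (𝕜 := ℂ) _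
  have hl : ‖adjoint (A l) x‖ ^ 2 ≤ ∑ i, ‖adjoint (A i) x‖ ^ 2 :=
    Finset.single_le_sum (fun i _ => sq_nonneg ‖adjoint (A i) x‖) (Finset.mem_univ l)
  have hx : 0 ≤ (⟪(1 - Phi A 1) x, x⟫_ℂ).re := hA.re_inner_nonneg_left x
  rw [one_mul, ← sq_le_sq₀ (norm_nonneg _) (norm_nonneg _)]
  linarith

theorem ennTrace_Phi_le {ι : Type*} (b : HilbertBasis ι ℂ H) (hA : ∀ l, ‖A l‖ ≤ 1)
    {X : H →L[ℂ] H} (hX : X.IsPositive) : b.ennTrace (Phi A X) ≤ n * b.ennTrace X := by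
  rw [Phi, b.ennTrace_sum _ fun i _ => hX.conj_adjoint (A i)]
  calc ∑ i, b.ennTrace (A i ∘L X ∘L adjoint (A i)) ≤ ∑ _i : Fin n, b.ennTrace X := by
        refine Finset.sum_le_sum fun i _ => (b.ennTrace_conj_le hX (A i)).trans ?_
        refine mul_le_of_le_one_left bot_le (pow_le_one₀ bot_le ?_)
        rw [← ofReal_norm]
        exact ENNReal.ofReal_le_one.mpr (hA i)
    _ = n * b.ennTrace X := by
        rw [Finset.sum_const, Finset.card_univ, Fintype.card_fin, nsmul_eq_mul]

end Phi

open scoped InnerProductSpace in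
/-- For a row contraction (`n ≥ 2`) with `I − Φ(I)` of finite trace, the limit
`lim_k tr(I − Φ^k(I)) / n^k` exists, the trace being computed against a Hilbert basis. -/
theorem stmt7 {H : Type*} [NormedAddCommGroup H] [InnerProductSpace ℂ H] [CompleteSpace H]
    {n : ℕ} (hn : 2 ≤ n) (A : Fin n → H →L[ℂ] H)
    (hA : (1 - Phi A 1).IsPositive)
    {ι : Type*} (b : HilbertBasis ι ℂ H)
    (htc : Summable fun i => (⟪(1 - Phi A 1) (b i), b i⟫_ℂ).re) :
    ∃ l : ℝ, Filter.Tendsto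
      (fun k : ℕ => (∑' i, (⟪(1 - (Phi A)^[k] 1) (b i), b i⟫_ℂ).re) / (n : ℝ) ^ k)
      Filter.atTop (nhds l) := by
  set D := 1 - Phi A 1
  have hpos : ∀ j, ((Phi A)^[j] D).IsPositive := isPositive_iterate_Phi A hA
  have hstep : ∀ j, b.ennTrace ((Phi A)^[j + 1] D) ≤ n * b.ennTrace ((Phi A)^[j] D) := by
    intro j
    rw [Function.iterate_succ_apply']
    exact ennTrace_Phi_le A b (norm_le_one_of_isPositive_one_sub_Phi_one A hA) (hpos j)
  have hfin : ∀ j, b.ennTrace ((Phi A)^[j] D) ≠ ⊤ := by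
    intro j
    induction j with
    | zero => exact b.ennTrace_ne_top_of_summable hA htc
    | succ j ih =>
      exact ne_top_of_le_ne_top (ENNReal.mul_ne_top (ENNReal.natCast_ne_top n) ih) (hstep j)
  set r := fun j => (b.ennTrace ((Phi A)^[j] D)).toReal
  have hr : ∀ j, r (j + 1) ≤ n * r j := fun j => by
    simpa only [ENNReal.toReal_mul, ENNReal.toReal_natCast] using
      ENNReal.toReal_mono (ENNReal.mul_ne_top (ENNReal.natCast_ne_top n) (hfin j)) (hstep j)
  have htrace : ∀ k, ∑' i, (⟪(1 - (Phi A)^[k] 1) (b i), b i⟫_ℂ).re = ∑ j ∈ Finset.range k, r j := by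
    intro k
    rw [one_sub_iterate_Phi_one,
      b.tsum_re_inner_eq_toReal_ennTrace (isPositive_sum _ fun j _ => hpos j),
      b.ennTrace_sum _ fun j _ => hpos j, ENNReal.toReal_sum fun j _ => hfin j]
  obtain ⟨l, hl⟩ := exists_tendsto_sum_range_div_pow (r := r) (by exact_mod_cast hn : (1 : ℝ) < n)
    (fun j => ENNReal.toReal_nonneg) hr
  exact ⟨l, by simpa only [htrace] using hl⟩
end
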